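/- Fix a real y > 1. Suppose for each even integer k ≥ 12 we are given b_k : ℕ → ℝ satisfying |b_k(n)| ≤ 2 C_k n^{k/2} for all n ≥ 1, where C_k = ((2π)^k/(k−1)!) · e^{28.466} · √((k/12)·log k) · (1.0242382·k/12)^{k/2}, and define F_k(iy) = E_k(iy) + ∑_{n≥1} b_k(n) e^{−2πny}. Then F_k(iy) → 1 as k → ∞ over even k; in particular (1/k) log|F_k(iy)| → 0, so the family F_k is sparse. -/

import Mathlib

open Filter Real

/-- The divisor power sum `σ_l(n) = ∑_{d ∣ n} d^l`, as a real number. -/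
noncomputable def sigmaR (l n : ℕ) : ℝ := ∑ d ∈ n.divisors, (d : ℝ) ^ l

/-- The Eisenstein series `E_k(iy) = 1 − (2k/B_k) ∑_{n≥1} σ_{k−1}(n) e^{−2πny}`. -/
noncomputable def EisW (k : ℕ) (y : ℝ) : ℝ :=
  1 - (2 * (k : ℝ) / ((bernoulli k : ℚ) : ℝ)) *
    ∑' n : ℕ, sigmaR (k - 1) (n + 1) * Real.exp (-2 * Real.pi * ((n : ℝ) + 1) * y)

/-- The constant
`C_k = ((2π)^k/(k−1)!) · e^{28.466} · √((k/12)·log k) · (1.0242382·k/12)^{k/2}`. -/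
noncomputable def Ck (k : ℕ) : ℝ :=
  ((2 * Real.pi) ^ k / (Nat.factorial (k - 1) : ℝ)) * Real.exp 28.466 *
    Real.sqrt (((k : ℝ) / 12) * Real.log k) *
    (1.0242382 * (k : ℝ) / 12) ^ ((k : ℝ) / 2)

/-- The extremal modular form `F_k(iy) = E_k(iy) + ∑_{n≥1} b_k(n) e^{−2πny}`. -/
noncomputable def Fext (b : ℕ → ℕ → ℝ) (k : ℕ) (y : ℝ) : ℝ :=
  EisW k y + ∑' n : ℕ, b k (n + 1) * Real.exp (-2 * Real.pi * ((n : ℝ) + 1) * y)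

/-!
Write `F_k(iy) − 1` as the cusp part minus `(2k/B_k) ∑ σ_{k−1}(n) e^{−2πny}`. Euler's formula and
`ζ(k) ≥ 1` give `|2k/B_k| ≤ (2π)^k/(k−1)!`, and `σ_{k−1}(n) ≤ n^k`. Splitting
`e^{−2πny} = e^{−π(y+1)n} e^{−π(y−1)n}`, the first factor absorbs `n^m` at the price of
`(m/(π(y+1)e))^m`, and the second is summable because `y > 1`. With `(k/e)^k ≤ k!` the Eisenstein
part is `O(k (2/(y+1))^k)` and the cusp part `O(k² ρ^{k/2})` with `ρ = π·1.0242382·e/(6(y+1)) < 1`,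
so both tend to `0`; the logarithmic statement follows by continuity.
-/

open scoped Nat

lemma pow_le_div_mul_exp_one_pow_mul_exp (m : ℕ) {c x : ℝ} (hc : 0 < c) (hx : 0 ≤ x) :
    x ^ m ≤ (m / (c * exp 1)) ^ m * exp (c * x) := by
  rcases m.eq_zero_or_pos with rfl | hm
  · simpa using one_le_exp (by positivity)
  have hm : (0 : ℝ) < m := by exact_mod_cast hm
  set u := c * x / m with hu_def
  have hu : u ^ m ≤ exp (c * x) / exp 1 ^ m := by
    calc u ^ m ≤ exp (u - 1) ^ m := by
          gcongr
          linarith [add_one_le_exp (u - 1)]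
      _ = exp (c * x) / exp 1 ^ m := by
          rw [← exp_nat_mul, ← exp_nat_mul, ← exp_sub, hu_def]
          congr 1
          field_simp
  calc x ^ m = u ^ m * (m / c) ^ m := by
        rw [← mul_pow, hu_def]; congr 1; field_simp
    _ ≤ exp (c * x) / exp 1 ^ m * (m / c) ^ m := by gcongr
    _ = (m / (c * exp 1)) ^ m * exp (c * x) := by
        rw [div_pow, div_pow, mul_pow]; ring

lemma div_exp_one_pow_div_factorial_pred_le {k : ℕ} (hk : k ≠ 0) :
    ((k : ℝ) / exp 1) ^ k / (k - 1)! ≤ k := by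
  have hfac : (k ! : ℝ) = k * (k - 1)! := by
    rw [← Nat.cast_mul, Nat.mul_factorial_pred hk]
  have hexp : (k : ℝ) ^ k / k ! ≤ exp 1 ^ k := by
    simpa using pow_div_factorial_le_exp (x := (k : ℝ)) (Nat.cast_nonneg k) k
  rw [div_le_iff₀ (by positivity), div_pow, div_le_iff₀ (by positivity)]
  rw [div_le_iff₀ (by positivity), hfac] at hexp
  linarith

lemma abs_tsum_le_of_abs_le_geometric {a : ℕ → ℝ} {M q : ℝ} (hq0 : 0 ≤ q) (hq1 : q < 1)
    (ha : ∀ n, |a n| ≤ M * q ^ (n + 1)) : |∑' n, a n| ≤ M * (q / (1 - q)) := by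
  have hgeom : HasSum (fun n : ℕ => M * q ^ (n + 1)) (M * (q / (1 - q))) := by
    have h := (hasSum_geometric_of_lt_one hq0 hq1).mul_left (M * q)
    rw [mul_assoc, ← div_eq_mul_inv] at h
    exact h.congr_fun fun n => by ring
  exact tsum_of_norm_bounded hgeom fun n => (norm_eq_abs (a n)).trans_le (ha n)

noncomputable def geomSumExp (d : ℝ) : ℝ := exp (-d) / (1 - exp (-d))

lemma geomSumExp_nonneg {d : ℝ} (hd : 0 ≤ d) : 0 ≤ geomSumExp d :=
  div_nonneg (exp_pos _).le (sub_nonneg.2 (exp_le_one_iff.2 (neg_nonpos.2 hd)))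

lemma abs_tsum_le_of_abs_le_pow_mul_exp {a : ℕ → ℝ} {C c d : ℝ} (m : ℕ) (hc : 0 < c)
    (hd : 0 < d) (ha : ∀ n : ℕ, |a n| ≤ C * ((n : ℝ) + 1) ^ m * exp (-(c + d) * (n + 1))) :
    |∑' n, a n| ≤ C * (m / (c * exp 1)) ^ m * geomSumExp d := by
  have hC : 0 ≤ C := nonneg_of_mul_nonneg_left
    ((abs_nonneg _).trans ((ha 0).trans_eq (mul_assoc _ _ _))) (by positivity)
  refine abs_tsum_le_of_abs_le_geometric (exp_pos _).le (exp_lt_one_iff.2 (neg_lt_zero.2 hd))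
    fun n => (ha n).trans ?_
  have hpow := pow_le_div_mul_exp_one_pow_mul_exp m hc (x := (n : ℝ) + 1) (by positivity)
  calc C * ((n : ℝ) + 1) ^ m * exp (-(c + d) * (n + 1))
      ≤ C * ((m / (c * exp 1)) ^ m * exp (c * (n + 1))) * exp (-(c + d) * (n + 1)) := by
        gcongr
    _ = C * (m / (c * exp 1)) ^ m * exp (-d) ^ (n + 1) := by
        rw [← exp_nat_mul, mul_assoc, mul_assoc, ← exp_add]
        push_cast; ring_nf

lemma abs_tsum_le_of_abs_le_pow_mul_qexp {a : ℕ → ℝ} {C y : ℝ} (m : ℕ) (hy : 1 < y)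
    (ha : ∀ n : ℕ, |a n| ≤ C * ((n : ℝ) + 1) ^ m * exp (-2 * π * ((n : ℝ) + 1) * y)) :
    |∑' n, a n| ≤ C * (m / (π * (y + 1) * exp 1)) ^ m * geomSumExp (π * (y - 1)) := by
  refine abs_tsum_le_of_abs_le_pow_mul_exp m (by positivity) (by nlinarith [pi_pos])
    fun n => (ha n).trans_eq ?_
  congr 2; ring

lemma abs_two_mul_div_bernoulli_le {k : ℕ} (hk : Even k) (hk0 : k ≠ 0) :
    |2 * (k : ℝ) / ((bernoulli k : ℚ) : ℝ)| ≤ (2 * π) ^ k / (k - 1)! := by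
  obtain ⟨j, rfl⟩ := hk
  rw [← two_mul] at hk0 ⊢
  have hj : j ≠ 0 := by omega
  set B : ℝ := ((bernoulli (2 * j) : ℚ) : ℝ)
  -- `ζ(2j) ≥ 1`, with `ζ(2j)` in Euler's closed form
  have hzeta : 1 ≤ (-1 : ℝ) ^ (j + 1) * 2 ^ (2 * j - 1) * π ^ (2 * j) * B / (2 * j)! := by
    simpa using le_hasSum (hasSum_zeta_nat hj) 1 fun n _ => by positivity
  have hfac : 2 * ((2 * j)! : ℝ) ≤ (2 * π) ^ (2 * j) * |B| := by
    have h2 : (2 : ℝ) ^ (2 * j - 1) * 2 = 2 ^ (2 * j) := by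
      rw [← pow_succ]; congr 1; omega
    rw [le_div_iff₀ (by positivity), one_mul] at hzeta
    calc 2 * ((2 * j)! : ℝ) ≤ 2 * ((-1 : ℝ) ^ (j + 1) * 2 ^ (2 * j - 1) * π ^ (2 * j) * B) := by
          gcongr
      _ ≤ 2 * |(-1 : ℝ) ^ (j + 1) * 2 ^ (2 * j - 1) * π ^ (2 * j) * B| := by
          gcongr; exact le_abs_self _
      _ = (2 * π) ^ (2 * j) * |B| := by
          simp only [abs_mul, abs_pow, abs_neg, abs_one, one_pow, abs_two, abs_of_pos pi_pos]
          rw [mul_pow, ← h2]; ring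
  have hB : 0 < |B| :=
    pos_of_mul_pos_right ((by positivity : (0 : ℝ) < 2 * (2 * j)!).trans_le hfac) (by positivity)
  have hk : ((2 * j : ℕ) : ℝ) * (2 * j - 1)! = (2 * j)! := by
    rw [← Nat.cast_mul, Nat.mul_factorial_pred hk0]
  rw [abs_div, abs_of_nonneg (by positivity), div_le_div_iff₀ hB (by positivity), mul_assoc, hk]
  exact hfac

lemma sigmaR_nonneg (l n : ℕ) : 0 ≤ sigmaR l n :=
  Finset.sum_nonneg fun _ _ => by positivity

lemma sigmaR_le_pow (l n : ℕ) : sigmaR l n ≤ (n : ℝ) ^ (l + 1) := by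
  calc sigmaR l n ≤ ∑ _d ∈ n.divisors, (n : ℝ) ^ l :=
        Finset.sum_le_sum fun d hd => by gcongr; exact Nat.divisor_le hd
    _ = n.divisors.card * (n : ℝ) ^ l := by rw [Finset.sum_const, nsmul_eq_mul]
    _ ≤ n * (n : ℝ) ^ l := by gcongr; exact_mod_cast Nat.card_divisors_le_self n
    _ = (n : ℝ) ^ (l + 1) := by ring

lemma abs_eisW_sub_one_le {k : ℕ} {y : ℝ} (hk : Even k) (hk0 : k ≠ 0) (hy : 1 < y) :
    |EisW k y - 1| ≤ k * (2 / (y + 1)) ^ k * geomSumExp (π * (y - 1)) := by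
  have hS := abs_tsum_le_of_abs_le_pow_mul_qexp (C := 1) k hy
    (a := fun n => sigmaR (k - 1) (n + 1) * exp (-2 * π * ((n : ℝ) + 1) * y)) fun n => by
      have hσ : sigmaR (k - 1) (n + 1) ≤ ((n : ℝ) + 1) ^ k := by
        simpa [Nat.sub_add_cancel (Nat.one_le_iff_ne_zero.2 hk0)] using
          sigmaR_le_pow (k - 1) (n + 1)
      rw [abs_of_nonneg (mul_nonneg (sigmaR_nonneg _ _) (exp_pos _).le), one_mul]
      gcongr
  have hG := geomSumExp_nonneg (mul_nonneg pi_pos.le (sub_nonneg.2 hy.le))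
  have hbase : 2 * π * (k / (π * (y + 1) * exp 1)) = 2 / (y + 1) * (k / exp 1) := by
    field_simp
  calc |EisW k y - 1|
      = |2 * (k : ℝ) / ((bernoulli k : ℚ) : ℝ)| *
          |∑' n : ℕ, sigmaR (k - 1) (n + 1) * exp (-2 * π * ((n : ℝ) + 1) * y)| := by
        rw [EisW, sub_sub_cancel_left, abs_neg, abs_mul]
    _ ≤ (2 * π) ^ k / (k - 1)! * (1 * (k / (π * (y + 1) * exp 1)) ^ k * geomSumExp (π * (y - 1))) :=
        by gcongr; exact abs_two_mul_div_bernoulli_le hk hk0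
    _ = (2 / (y + 1)) ^ k * (((k : ℝ) / exp 1) ^ k / (k - 1)!) * geomSumExp (π * (y - 1)) := by
        rw [one_mul, div_mul_eq_mul_div, ← mul_assoc, ← mul_pow, hbase, mul_pow]
        ring
    _ ≤ (2 / (y + 1)) ^ k * k * geomSumExp (π * (y - 1)) := by
        gcongr; exact div_exp_one_pow_div_factorial_pred_le hk0
    _ = k * (2 / (y + 1)) ^ k * geomSumExp (π * (y - 1)) := by ring

-- Chosen so that `(2π)² · (1.0242382 k/12) · (k/2)/(π(y+1)e) = cuspRatio y · (k/e)²`.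
noncomputable def cuspRatio (y : ℝ) : ℝ := π * 1.0242382 * exp 1 / (6 * (y + 1))

lemma cuspRatio_nonneg {y : ℝ} (hy : -1 ≤ y) : 0 ≤ cuspRatio y := by
  unfold cuspRatio
  have : 0 ≤ y + 1 := by linarith
  positivity

lemma cuspRatio_lt_one {y : ℝ} (hy : 1 ≤ y) : cuspRatio y < 1 := by
  rw [cuspRatio, div_lt_one (by linarith)]
  nlinarith [pi_lt_d2, exp_one_lt_d9, pi_pos, exp_pos 1]

lemma Ck_mul_pow_le {m : ℕ} (hm : m ≠ 0) {y : ℝ} (hy : -1 ≤ y) :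
    Ck (m + m) * (m / (π * (y + 1) * exp 1)) ^ m ≤
      exp 28.466 * ((m + m : ℕ) : ℝ) ^ 2 * cuspRatio y ^ m := by
  set k := m + m with hk
  have hk0 : k ≠ 0 := by omega
  have hhalf : (k : ℝ) / 2 = m := by rw [hk]; push_cast; ring
  have hsqrt : √((k / 12) * log k) ≤ k := by
    rw [sqrt_le_left (Nat.cast_nonneg k)]
    nlinarith [log_le_self (Nat.cast_nonneg (α := ℝ) k), log_natCast_nonneg k,
      (Nat.cast_nonneg k : (0 : ℝ) ≤ k)]
  have hbase : (2 * π) ^ 2 * (1.0242382 * k / 12) * (m / (π * (y + 1) * exp 1)) =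
      cuspRatio y * (k / exp 1) ^ 2 := by
    rw [cuspRatio, hk]; push_cast; field_simp; ring
  have hpow : (2 * π) ^ k * (1.0242382 * k / 12) ^ m * (m / (π * (y + 1) * exp 1)) ^ m =
      cuspRatio y ^ m * (k / exp 1) ^ k := by
    have h2m : k = 2 * m := by omega
    rw [h2m, pow_mul, pow_mul, ← mul_pow, ← mul_pow, ← h2m, hbase, mul_pow]
  calc Ck k * (m / (π * (y + 1) * exp 1)) ^ m
      = exp 28.466 * √((k / 12) * log k) *
          ((2 * π) ^ k * (1.0242382 * k / 12) ^ m * (m / (π * (y + 1) * exp 1)) ^ m) /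
            (k - 1)! := by
        rw [Ck, hhalf, rpow_natCast]; ring
    _ = exp 28.466 * √((k / 12) * log k) * (cuspRatio y ^ m * ((k / exp 1) ^ k / (k - 1)!)) := by
        rw [hpow]; ring
    _ ≤ exp 28.466 * k * (cuspRatio y ^ m * k) := by
        have := cuspRatio_nonneg hy
        gcongr
        exact div_exp_one_pow_div_factorial_pred_le hk0
    _ = exp 28.466 * (k : ℝ) ^ 2 * cuspRatio y ^ m := by ring

lemma abs_tsum_cusp_le {k : ℕ} {y : ℝ} {β : ℕ → ℝ} (hk : Even k) (hk0 : k ≠ 0) (hy : 1 < y)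
    (hβ : ∀ n : ℕ, 1 ≤ n → |β n| ≤ 2 * Ck k * (n : ℝ) ^ ((k : ℝ) / 2)) :
    |∑' n : ℕ, β (n + 1) * exp (-2 * π * ((n : ℝ) + 1) * y)| ≤
      2 * exp 28.466 * ((k : ℝ) ^ 2 * √(cuspRatio y) ^ k) * geomSumExp (π * (y - 1)) := by
  obtain ⟨m, rfl⟩ := hk
  have hm : m ≠ 0 := by omega
  have hhalf : ((m + m : ℕ) : ℝ) / 2 = m := by push_cast; ring
  have hS := abs_tsum_le_of_abs_le_pow_mul_qexp (C := 2 * Ck (m + m)) m hy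
    (a := fun n => β (n + 1) * exp (-2 * π * ((n : ℝ) + 1) * y)) fun n => by
      rw [abs_mul, abs_exp]
      gcongr
      simpa [hhalf] using hβ (n + 1) n.succ_pos
  have hG := geomSumExp_nonneg (mul_nonneg pi_pos.le (sub_nonneg.2 hy.le))
  have hsq : √(cuspRatio y) ^ (m + m) = cuspRatio y ^ m := by
    rw [← two_mul, pow_mul, sq_sqrt (cuspRatio_nonneg (by linarith))]
  calc _ ≤ 2 * (Ck (m + m) * (m / (π * (y + 1) * exp 1)) ^ m) * geomSumExp (π * (y - 1)) := by
        linarith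
    _ ≤ 2 * (exp 28.466 * ((m + m : ℕ) : ℝ) ^ 2 * cuspRatio y ^ m) * geomSumExp (π * (y - 1)) := by
        gcongr 2 * ?_ * _; exact Ck_mul_pow_le hm (by linarith)
    _ = _ := by rw [hsq]; ring

lemma abs_fext_sub_one_le {b : ℕ → ℕ → ℝ} {k : ℕ} {y : ℝ} (hk : Even k) (hk0 : k ≠ 0)
    (hy : 1 < y) (hb : ∀ n : ℕ, 1 ≤ n → |b k n| ≤ 2 * Ck k * (n : ℝ) ^ ((k : ℝ) / 2)) :
    |Fext b k y - 1| ≤ geomSumExp (π * (y - 1)) *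
      (k * (2 / (y + 1)) ^ k + 2 * exp 28.466 * ((k : ℝ) ^ 2 * √(cuspRatio y) ^ k)) := by
  calc |Fext b k y - 1|
      ≤ |EisW k y - 1| + |∑' n : ℕ, b k (n + 1) * exp (-2 * π * ((n : ℝ) + 1) * y)| := by
        rw [Fext, add_sub_right_comm]; exact abs_add_le _ _
    _ ≤ _ := by
        have := add_le_add (abs_eisW_sub_one_le hk hk0 hy) (abs_tsum_cusp_le hk hk0 hy hb)
        linarith

lemma tendsto_one_div_mul_log_abs {l : Filter ℕ} (hl : l ≤ atTop) {f : ℕ → ℝ}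
    (hf : Tendsto f l (nhds 1)) : Tendsto (fun k : ℕ => 1 / (k : ℝ) * log |f k|) l (nhds 0) := by
  have hlog : Tendsto (fun k => log |f k|) l (nhds 0) := by
    simpa using ((continuous_abs.tendsto 1).comp hf).log (by norm_num)
  simpa using (tendsto_one_div_atTop_nhds_zero_nat.mono_left hl).mul hlog

/-- Fix a real `y > 1`.  If for each even `k ≥ 12` the cusp-form coefficients `b_k : ℕ → ℝ`
satisfy `|b_k(n)| ≤ 2 C_k n^{k/2}` for all `n ≥ 1`, and
`F_k(iy) = E_k(iy) + ∑_{n≥1} b_k(n) e^{−2πny}`, then `F_k(iy) → 1` as `k → ∞` over even `k`;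
in particular `(1/k) log|F_k(iy)| → 0`, so the family `F_k` is sparse. -/
theorem extremal_forms_sparse (y : ℝ) (hy : 1 < y) (b : ℕ → ℕ → ℝ)
    (hb : ∀ k : ℕ, Even k → 12 ≤ k → ∀ n : ℕ, 1 ≤ n →
      |b k n| ≤ 2 * Ck k * (n : ℝ) ^ ((k : ℝ) / 2)) :
    Tendsto (fun k : ℕ => Fext b k y)
      (atTop ⊓ Filter.principal {k : ℕ | Even k}) (nhds 1) ∧
    Tendsto (fun k : ℕ => (1 / (k : ℝ)) * Real.log |Fext b k y|)
      (atTop ⊓ Filter.principal {k : ℕ | Even k}) (nhds 0) := by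
  have hr : |2 / (y + 1)| < 1 := by
    rw [abs_of_pos (by positivity), div_lt_one (by positivity)]; linarith
  have hρ : |√(cuspRatio y)| < 1 := by
    rw [abs_of_nonneg (sqrt_nonneg _), sqrt_lt' one_pos, one_pow]
    exact cuspRatio_lt_one hy.le
  have hbound : ∀ᶠ k in atTop ⊓ Filter.principal {k : ℕ | Even k}, ‖Fext b k y - 1‖ ≤
      geomSumExp (π * (y - 1)) *
        (k * (2 / (y + 1)) ^ k + 2 * exp 28.466 * ((k : ℝ) ^ 2 * √(cuspRatio y) ^ k)) := by
    rw [eventually_inf_principal]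
    filter_upwards [eventually_ge_atTop 12] with k hk12 hk
    exact abs_fext_sub_one_le hk (by omega) hy (hb k hk hk12)
  have hlim := ((tendsto_pow_const_mul_const_pow_of_abs_lt_one 1 hr).add
    ((tendsto_pow_const_mul_const_pow_of_abs_lt_one 2 hρ).const_mul (2 * exp 28.466))).const_mul
      (geomSumExp (π * (y - 1)))
  simp only [pow_one, mul_zero, add_zero] at hlim
  have hF : Tendsto (fun k => Fext b k y) (atTop ⊓ Filter.principal {k : ℕ | Even k}) (nhds 1) :=
    tendsto_sub_nhds_zero_iff.1 (squeeze_zero_norm' hbound (hlim.mono_left inf_le_left))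
  exact ⟨hF, tendsto_one_div_mul_log_abs inf_le_left hF⟩
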